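/- arXiv:1808.03169 — 5 statements merged into one kernel-verified Lean document; each statement's English description precedes it below -/
import Mathlib

section
/- Let Φ : X → Y be a homogeneous map between p-normed spaces satisfying the p-linearity estimate ‖Φ(∑ x_i) − ∑ Φ(x_i)‖ ≤ K (∑ ‖x_i‖^p)^(1/p) for all finite families. Define on Y × X the quasinorm ‖(y,x)‖_Φ = ‖y − Φ(x)‖ + ‖x‖. Then for any finite family (y_i, x_i) one has ‖∑ (y_i, x_i)‖_Φ ≤ (1 + K^p)^(1/p) · 2^(1/p − 1) · (∑ ‖(y_i, x_i)‖_Φ^p)^(1/p). -/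
/-!
The `Y`-component `∑ yᵢ - Φ (∑ xᵢ)` of `∑ zᵢ` is `∑ (yᵢ - Φ xᵢ)` plus the defect of `Φ`, so
`p`-subadditivity and the `p`-linearity estimate bound the sum of the `p`-th powers of the
two components of `‖∑ zᵢ‖_Φ` by `(1 + K ^ p) * ∑ (aᵢ ^ p + bᵢ ^ p)`, with `aᵢ = NY (yᵢ - Φ xᵢ)`
and `bᵢ = NX xᵢ`.
Concavity of `t ↦ t ^ p` gives `aᵢ ^ p + bᵢ ^ p ≤ 2 ^ (1 - p) * ‖zᵢ‖_Φ ^ p`, and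
`a + b ≤ (a ^ p + b ^ p) ^ (1 / p)` returns from `p`-th powers to `‖∑ zᵢ‖_Φ`.
-/

namespace Real

variable {p : ℝ}

lemma rpow_add_rpow_le_two_rpow_mul_rpow_add (hp0 : 0 < p) (hp1 : p ≤ 1) {a b : ℝ}
    (ha : 0 ≤ a) (hb : 0 ≤ b) : a ^ p + b ^ p ≤ 2 ^ (1 - p) * (a + b) ^ p := by
  have hmid := (concaveOn_rpow hp0.le hp1).2 (Set.mem_Ici.2 ha) (Set.mem_Ici.2 hb)
    (by norm_num : (0 : ℝ) ≤ 1 / 2) (by norm_num : (0 : ℝ) ≤ 1 / 2) (add_halves 1)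
  have h2p : (0 : ℝ) < 2 ^ p := rpow_pos_of_pos two_pos p
  simp only [smul_eq_mul, one_div_mul_eq_div] at hmid
  rw [← add_div, ← add_div, div_rpow (add_nonneg ha hb) zero_le_two,
    div_le_div_iff₀ two_pos h2p] at hmid
  rw [rpow_sub two_pos, rpow_one, div_mul_eq_mul_div, le_div_iff₀ h2p]
  linarith

lemma sum_rpow_add_sum_rpow_le {ι : Type*} (s : Finset ι) (hp0 : 0 < p) (hp1 : p ≤ 1)
    {a b : ι → ℝ} (ha : ∀ i, 0 ≤ a i) (hb : ∀ i, 0 ≤ b i) :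
    ∑ i ∈ s, a i ^ p + ∑ i ∈ s, b i ^ p ≤ 2 ^ (1 - p) * ∑ i ∈ s, (a i + b i) ^ p := by
  rw [← Finset.sum_add_distrib, Finset.mul_sum]
  exact Finset.sum_le_sum fun i _ => rpow_add_rpow_le_two_rpow_mul_rpow_add hp0 hp1 (ha i) (hb i)

lemma add_le_of_rpow_add_rpow_le (hp0 : 0 < p) (hp1 : p ≤ 1) {a b c S : ℝ} (ha : 0 ≤ a)
    (hb : 0 ≤ b) (hc : 0 ≤ c) (hS : 0 ≤ S) (h : a ^ p + b ^ p ≤ c * (2 ^ (1 - p) * S)) :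
    a + b ≤ c ^ (1 / p) * 2 ^ (1 / p - 1) * S ^ (1 / p) := by
  have h2 : (0 : ℝ) ≤ 2 ^ (1 - p) := rpow_nonneg zero_le_two _
  calc a + b = (a ^ (1 : ℝ) + b ^ (1 : ℝ)) ^ (1 / 1 : ℝ) := by simp
    _ ≤ (a ^ p + b ^ p) ^ (1 / p) := rpow_add_rpow_le ha hb hp0 hp1
    _ ≤ (c * (2 ^ (1 - p) * S)) ^ (1 / p) := by gcongr
    _ = c ^ (1 / p) * 2 ^ (1 / p - 1) * S ^ (1 / p) := by
      rw [mul_rpow hc (mul_nonneg h2 hS), mul_rpow h2 hS, ← rpow_mul zero_le_two,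
        sub_mul, one_mul, mul_one_div_cancel hp0.ne', mul_assoc]

end Real

lemma rpow_sum_le_sum_rpow {ι M : Type*} [AddCommMonoid M] {N : M → ℝ} {p : ℝ} (hp : 0 < p)
    (hN0 : N 0 = 0) (hNp : ∀ a b, N (a + b) ^ p ≤ N a ^ p + N b ^ p) (s : Finset ι) (g : ι → M) :
    N (∑ i ∈ s, g i) ^ p ≤ ∑ i ∈ s, N (g i) ^ p :=
  Finset.le_sum_of_subadditive (fun z => N z ^ p) (by simp [hN0, Real.zero_rpow hp.ne']) hNp s g

section QuasiLinear

variable {X Y : Type*} [AddCommGroup X] [AddCommGroup Y] {NX : X → ℝ} {NY : Y → ℝ} {p K : ℝ}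
  {Φ : X → Y}

lemma rpow_sum_sub_map_sum_le (hp : 0 < p) (hK : 0 ≤ K) (hNX0 : ∀ x, 0 ≤ NX x)
    (hNY0 : ∀ y, 0 ≤ NY y) (hNY_zero : NY 0 = 0) (hNY_neg : ∀ y, NY (-y) = NY y)
    (hNYp : ∀ y y', NY (y + y') ^ p ≤ NY y ^ p + NY y' ^ p) {ι : Type*} (s : Finset ι)
    (x : ι → X) (y : ι → Y)
    (hΦ : NY (Φ (∑ i ∈ s, x i) - ∑ i ∈ s, Φ (x i)) ≤ K * (∑ i ∈ s, NX (x i) ^ p) ^ (1 / p)) :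
    NY (∑ i ∈ s, y i - Φ (∑ i ∈ s, x i)) ^ p ≤
      ∑ i ∈ s, NY (y i - Φ (x i)) ^ p + K ^ p * ∑ i ∈ s, NX (x i) ^ p := by
  have hSX : 0 ≤ ∑ i ∈ s, NX (x i) ^ p := Finset.sum_nonneg fun i _ => Real.rpow_nonneg (hNX0 _) p
  have hdefect :
      NY (Φ (∑ i ∈ s, x i) - ∑ i ∈ s, Φ (x i)) ^ p ≤ K ^ p * ∑ i ∈ s, NX (x i) ^ p := by
    calc _ ≤ (K * (∑ i ∈ s, NX (x i) ^ p) ^ (1 / p)) ^ p := by gcongr; exact hNY0 _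
      _ = K ^ p * ∑ i ∈ s, NX (x i) ^ p := by
        rw [Real.mul_rpow hK (by positivity), ← Real.rpow_mul hSX, one_div_mul_cancel hp.ne',
          Real.rpow_one]
  have hsplit : ∑ i ∈ s, y i - Φ (∑ i ∈ s, x i) =
      ∑ i ∈ s, (y i - Φ (x i)) + -(Φ (∑ i ∈ s, x i) - ∑ i ∈ s, Φ (x i)) := by
    rw [Finset.sum_sub_distrib]; abel
  rw [hsplit]
  refine (hNYp _ _).trans (add_le_add ?_ ?_)
  · exact rpow_sum_le_sum_rpow hp hNY_zero hNYp s _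
  · rwa [hNY_neg]

end QuasiLinear

theorem phiNorm_sum_le_general (p K : ℝ) (hp0 : 0 < p) (hp1 : p ≤ 1) (hK : 0 ≤ K)
    (X : Type*) [AddCommGroup X] [Module ℝ X]
    (Y : Type*) [AddCommGroup Y] [Module ℝ Y]
    (NX : X → ℝ) (NY : Y → ℝ)
    (hNX0 : ∀ x, 0 ≤ NX x)
    (hNXhom : ∀ (c : ℝ) (x : X), NX (c • x) = |c| * NX x)
    (hNXp : ∀ x x', NX (x + x') ^ p ≤ NX x ^ p + NX x' ^ p)
    (hNY0 : ∀ y, 0 ≤ NY y)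
    (hNYhom : ∀ (c : ℝ) (y : Y), NY (c • y) = |c| * NY y)
    (hNYp : ∀ y y', NY (y + y') ^ p ≤ NY y ^ p + NY y' ^ p)
    (Φ : X → Y)
    (hΦK : ∀ (n : ℕ) (x : Fin n → X),
      NY (Φ (∑ i, x i) - ∑ i, Φ (x i)) ≤ K * (∑ i, NX (x i) ^ p) ^ (1 / p))
    (n : ℕ) (z : Fin n → Y × X) :
    NY ((∑ i, z i).1 - Φ ((∑ i, z i).2)) + NX ((∑ i, z i).2) ≤
      (1 + K ^ p) ^ (1 / p) * 2 ^ (1 / p - 1) *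
        (∑ i, (NY ((z i).1 - Φ ((z i).2)) + NX ((z i).2)) ^ p) ^ (1 / p) := by
  have hNX_zero : NX 0 = 0 := by simpa using hNXhom 0 0
  have hNY_zero : NY 0 = 0 := by simpa using hNYhom 0 0
  have hNY_neg : ∀ y, NY (-y) = NY y := fun y => by simpa using hNYhom (-1) y
  set SY := ∑ i, NY ((z i).1 - Φ (z i).2) ^ p
  set SX := ∑ i, NX (z i).2 ^ p
  have hSY : 0 ≤ SY := Finset.sum_nonneg fun i _ => Real.rpow_nonneg (hNY0 _) p
  have hX : NX (∑ i, (z i).2) ^ p ≤ SX := rpow_sum_le_sum_rpow hp0 hNX_zero hNXp _ _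
  have hY : NY (∑ i, (z i).1 - Φ (∑ i, (z i).2)) ^ p ≤ SY + K ^ p * SX :=
    rpow_sum_sub_map_sum_le hp0 hK hNX0 hNY0 hNY_zero hNY_neg hNYp _ _ _ (hΦK n _)
  rw [Prod.fst_sum, Prod.snd_sum]
  refine Real.add_le_of_rpow_add_rpow_le hp0 hp1 (hNY0 _) (hNX0 _) (by positivity)
    (Finset.sum_nonneg fun i _ => Real.rpow_nonneg (add_nonneg (hNY0 _) (hNX0 _)) p) ?_
  calc _ ≤ SY + K ^ p * SX + SX := add_le_add hY hX
    _ ≤ (1 + K ^ p) * (SY + SX) := by nlinarith [Real.rpow_nonneg hK p]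
    _ ≤ (1 + K ^ p) * (2 ^ (1 - p) * _) := by
      gcongr
      exact Real.sum_rpow_add_sum_rpow_le _ hp0 hp1 (fun i => hNY0 _) (fun i => hNX0 _)

/-- If `Φ : X → Y` is homogeneous and `p`-linear with constant `K`, the quasinorm
`‖(y,x)‖_Φ = ‖y − Φ x‖ + ‖x‖` on `Y × X` satisfies the stated `p`-convexity estimate. -/
theorem phiNorm_sum_le (p K : ℝ) (hp0 : 0 < p) (hp1 : p ≤ 1) (hK : 0 ≤ K)
    (X : Type*) [AddCommGroup X] [Module ℝ X]
    (Y : Type*) [AddCommGroup Y] [Module ℝ Y]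
    (NX : X → ℝ) (NY : Y → ℝ)
    (hNX0 : ∀ x, 0 ≤ NX x) (hNXdef : ∀ x, NX x = 0 ↔ x = 0)
    (hNXhom : ∀ (c : ℝ) (x : X), NX (c • x) = |c| * NX x)
    (hNXp : ∀ x x', NX (x + x') ^ p ≤ NX x ^ p + NX x' ^ p)
    (hNY0 : ∀ y, 0 ≤ NY y) (hNYdef : ∀ y, NY y = 0 ↔ y = 0)
    (hNYhom : ∀ (c : ℝ) (y : Y), NY (c • y) = |c| * NY y)
    (hNYp : ∀ y y', NY (y + y') ^ p ≤ NY y ^ p + NY y' ^ p)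
    (Φ : X → Y)
    (hΦhom : ∀ (c : ℝ) (x : X), Φ (c • x) = c • Φ x)
    (hΦK : ∀ (n : ℕ) (x : Fin n → X),
      NY (Φ (∑ i, x i) - ∑ i, Φ (x i)) ≤ K * (∑ i, NX (x i) ^ p) ^ (1 / p))
    (n : ℕ) (z : Fin n → Y × X) :
    NY ((∑ i, z i).1 - Φ ((∑ i, z i).2)) + NX ((∑ i, z i).2) ≤
      (1 + K ^ p) ^ (1 / p) * 2 ^ (1 / p - 1) *
        (∑ i, (NY ((z i).1 - Φ ((z i).2)) + NX ((z i).2)) ^ p) ^ (1 / p) :=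
  phiNorm_sum_le_general p K hp0 hp1 hK X Y NX NY hNX0 hNXhom hNXp hNY0 hNYhom hNYp Φ hΦK n z
end

section
/- Let Φ : X → Y be a p-linear map with constant K and let H be a Hamel basis of X. Define L(x) = ∑_{h∈H} λ_h(x) Φ(h) where x = ∑_h λ_h(x) h, and Φ̃ = Φ − L. Then Φ̃ vanishes on H and for every x = ∑_h λ_h(x) h one has ‖Φ̃(x)‖ ≤ K (∑_h |λ_h(x)|^p ‖h‖^p)^(1/p). -/
/-!
Expanding `x = ∑_h λ_h(x) h` over the finite support of its coordinates, homogeneity of `Φ`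
turns `L x` into `∑_h Φ(λ_h(x) h)`, so `Φ̃ x` is exactly the defect of `Φ` on this finite
family and the `p`-linearity estimate applies, with `‖λ_h(x) h‖^p = |λ_h(x)|^p ‖h‖^p`.
-/

theorem Finset.sum_comp_equivFin_symm {κ M : Type*} [AddCommMonoid M] (s : Finset κ)
    (g : κ → M) : ∑ j, g (s.equivFin.symm j) = ∑ i ∈ s, g i := by
  rw [← Finset.sum_coe_sort s g]
  exact Equiv.sum_comp s.equivFin.symm (fun i : s => g i)

section PLinearDefect

variable {X Y : Type*} [AddCommGroup X] [AddCommGroup Y]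
  {p K : ℝ} {NX : X → ℝ} {NY : Y → ℝ} {Φ : X → Y}

theorem defect_finset_le_of_defect_fin_le
    (hΦK : ∀ (n : ℕ) (x : Fin n → X),
      NY (Φ (∑ i, x i) - ∑ i, Φ (x i)) ≤ K * (∑ i, NX (x i) ^ p) ^ (1 / p))
    {κ : Type*} (s : Finset κ) (f : κ → X) :
    NY (Φ (∑ i ∈ s, f i) - ∑ i ∈ s, Φ (f i)) ≤ K * (∑ i ∈ s, NX (f i) ^ p) ^ (1 / p) := by
  simpa only [Finset.sum_comp_equivFin_symm s f,
    Finset.sum_comp_equivFin_symm s fun i => Φ (f i),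
    Finset.sum_comp_equivFin_symm s fun i => NX (f i) ^ p] using
    hΦK s.card fun j => f (s.equivFin.symm j)

variable [Module ℝ X] [Module ℝ Y]

theorem defect_linearCombination_le
    (hNX0 : ∀ x, 0 ≤ NX x) (hNXhom : ∀ (c : ℝ) (x : X), NX (c • x) = |c| * NX x)
    (hΦhom : ∀ (c : ℝ) (x : X), Φ (c • x) = c • Φ x)
    (hΦK : ∀ (n : ℕ) (x : Fin n → X),
      NY (Φ (∑ i, x i) - ∑ i, Φ (x i)) ≤ K * (∑ i, NX (x i) ^ p) ^ (1 / p))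
    {ι : Type*} (v : ι → X) (c : ι →₀ ℝ) :
    NY (Φ (Finsupp.linearCombination ℝ v c) - c.sum fun h a => a • Φ (v h)) ≤
      K * (c.sum fun h a => |a| ^ p * NX (v h) ^ p) ^ (1 / p) := by
  have hL : (c.sum fun h a => a • Φ (v h)) = ∑ h ∈ c.support, Φ (c h • v h) :=
    Finset.sum_congr rfl fun _ _ => (hΦhom _ _).symm
  have hnorm : (c.sum fun h a => |a| ^ p * NX (v h) ^ p) =
      ∑ h ∈ c.support, NX (c h • v h) ^ p :=
    Finset.sum_congr rfl fun _ _ => by rw [hNXhom, Real.mul_rpow (abs_nonneg _) (hNX0 _)]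
  rw [Finsupp.linearCombination_apply, hL, hnorm]
  exact defect_finset_le_of_defect_fin_le hΦK _ _

end PLinearDefect

theorem tilde_phi_estimate_general (p K : ℝ)
    (X : Type*) [AddCommGroup X] [Module ℝ X]
    (Y : Type*) [AddCommGroup Y] [Module ℝ Y]
    (NX : X → ℝ) (NY : Y → ℝ)
    (hNX0 : ∀ x, 0 ≤ NX x)
    (hNXhom : ∀ (c : ℝ) (x : X), NX (c • x) = |c| * NX x)
    (Φ : X → Y)
    (hΦhom : ∀ (c : ℝ) (x : X), Φ (c • x) = c • Φ x)
    (hΦK : ∀ (n : ℕ) (x : Fin n → X),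
      NY (Φ (∑ i, x i) - ∑ i, Φ (x i)) ≤ K * (∑ i, NX (x i) ^ p) ^ (1 / p))
    (ι : Type*) (b : Module.Basis ι ℝ X) :
    (∀ i : ι,
      Φ (b i) - ((b.repr (b i)).sum fun h c => c • Φ (b h)) = 0) ∧
    (∀ x : X,
      NY (Φ x - ((b.repr x).sum fun h c => c • Φ (b h))) ≤
        K * (((b.repr x).sum fun h c => |c| ^ p * NX (b h) ^ p) ^ (1 / p))) := by
  refine ⟨fun i => ?_, fun x => ?_⟩
  · simp
  · simpa only [b.linearCombination_repr] using
      defect_linearCombination_le hNX0 hNXhom hΦhom hΦK b (b.repr x)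

/-- Given a `p`-linear map `Φ : X → Y` with constant `K` and a Hamel basis `b` of `X`,
the map `Φ̃ = Φ − L`, where `L x = ∑_h λ_h(x) Φ(b h)`, vanishes on the basis and
satisfies `‖Φ̃ x‖ ≤ K (∑_h |λ_h(x)|^p ‖b h‖^p)^(1/p)`. -/
theorem tilde_phi_estimate (p K : ℝ) (hp0 : 0 < p) (hp1 : p ≤ 1) (hK : 0 ≤ K)
    (X : Type*) [AddCommGroup X] [Module ℝ X]
    (Y : Type*) [AddCommGroup Y] [Module ℝ Y]
    (NX : X → ℝ) (NY : Y → ℝ)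
    (hNX0 : ∀ x, 0 ≤ NX x) (hNXdef : ∀ x, NX x = 0 ↔ x = 0)
    (hNXhom : ∀ (c : ℝ) (x : X), NX (c • x) = |c| * NX x)
    (hNXp : ∀ x x', NX (x + x') ^ p ≤ NX x ^ p + NX x' ^ p)
    (hNY0 : ∀ y, 0 ≤ NY y) (hNYdef : ∀ y, NY y = 0 ↔ y = 0)
    (hNYhom : ∀ (c : ℝ) (y : Y), NY (c • y) = |c| * NY y)
    (hNYp : ∀ y y', NY (y + y') ^ p ≤ NY y ^ p + NY y' ^ p)
    (Φ : X → Y)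
    (hΦhom : ∀ (c : ℝ) (x : X), Φ (c • x) = c • Φ x)
    (hΦK : ∀ (n : ℕ) (x : Fin n → X),
      NY (Φ (∑ i, x i) - ∑ i, Φ (x i)) ≤ K * (∑ i, NX (x i) ^ p) ^ (1 / p))
    (ι : Type*) (b : Module.Basis ι ℝ X) :
    (∀ i : ι,
      Φ (b i) - ((b.repr (b i)).sum fun h c => c • Φ (b h)) = 0) ∧
    (∀ x : X,
      NY (Φ x - ((b.repr x).sum fun h c => c • Φ (b h))) ≤
        K * (((b.repr x).sum fun h c => |c| ^ p * NX (b h) ^ p) ^ (1 / p))) :=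
  tilde_phi_estimate_general p K X Y NX NY hNX0 hNXhom Φ hΦhom hΦK ι b
end

section
/- Correction of the bound: let u^♭ : E → F and u^♯ : F → E be operators between p-normed spaces with u^♯ ∘ u^♭ = id_E and max(‖u^♭‖, ‖u^♯‖) ≤ 1+ε. Define a new p-norm on F by |f| = inf { (‖x‖^p + (1+ε)^p ‖g‖^p)^(1/p) : f = u^♭(x) + g, x ∈ E, g ∈ F }. Then (1+ε)^(−1)‖f‖ ≤ |f| ≤ (1+ε)‖f‖ for all f ∈ F, |u^♭(x)| = ‖x‖ for all x ∈ E, and ‖u^♯(f)‖ ≤ |f| for all f ∈ F. -/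
open scoped BigOperators

/-!
All estimates are made on `p`-th powers, where the `p`-triangle inequality is additive: an upper
bound on `|f|` needs one decomposition `f = u♭ x + g`, a lower bound must hold for all of them.
For the lower bounds, `‖u♭ x + g‖^p ≤ (1+ε)^p ‖x‖^p + ‖g‖^p ≤ (1+ε)^p (‖x‖^p + (1+ε)^p ‖g‖^p)`
gives `‖f‖ ≤ (1+ε) |f|`, and `u♯ f = x + u♯ g` gives `‖u♯ f‖^p ≤ ‖x‖^p + (1+ε)^p ‖g‖^p`.
Then `|u♭ x| = ‖x‖` follows from the decomposition `u♭ x + 0` and `u♯ u♭ = id`.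
-/

/-- The corrected `p`-norm `|f| = inf {(‖x‖^p + (1+ε)^p ‖g‖^p)^(1/p) : f = u♭ x + g}`. -/
noncomputable def corrNorm {E F : Type*} [AddCommGroup E] [Module ℝ E]
    [AddCommGroup F] [Module ℝ F]
    (NE : E → ℝ) (NF : F → ℝ) (ub : E →ₗ[ℝ] F) (p ε : ℝ) (f : F) : ℝ :=
  sInf {r : ℝ | ∃ x : E, ∃ g : F,
    f = ub x + g ∧ r = (NE x ^ p + (1 + ε) ^ p * NF g ^ p) ^ (1 / p)}

lemma Real.rpow_le_mul_rpow_of_le_mul {a b K p : ℝ} (ha : 0 ≤ a) (hb : 0 ≤ b) (hK : 0 ≤ K)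
    (hp : 0 ≤ p) (h : a ≤ K * b) : a ^ p ≤ K ^ p * b ^ p :=
  Real.mul_rpow hK hb ▸ Real.rpow_le_rpow ha h hp

section CorrNorm

variable {E F : Type*} [AddCommGroup E] [Module ℝ E] [AddCommGroup F] [Module ℝ F]
  {NE : E → ℝ} {NF : F → ℝ} {ub : E →ₗ[ℝ] F} {p ε : ℝ}

lemma le_corrNorm_of_rpow_le (hp : 0 < p) {f : F} {c : ℝ} (hc : 0 ≤ c)
    (hNE0 : ∀ x, 0 ≤ NE x) (hNF0 : ∀ f, 0 ≤ NF f) (hε : 0 ≤ 1 + ε)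
    (h : ∀ x g, f = ub x + g → c ^ p ≤ NE x ^ p + (1 + ε) ^ p * NF g ^ p) :
    c ≤ corrNorm NE NF ub p ε f := by
  refine le_csInf ⟨_, 0, f, by simp, rfl⟩ ?_
  rintro r ⟨x, g, hfg, rfl⟩
  rw [one_div, Real.le_rpow_inv_iff_of_pos hc (by positivity [hNE0 x, hNF0 g]) hp]
  exact h x g hfg

lemma corrNorm_le_of_le_rpow (hp : 0 < p) {f : F} {c : ℝ} (hc : 0 ≤ c)
    (hNE0 : ∀ x, 0 ≤ NE x) (hNF0 : ∀ f, 0 ≤ NF f) (hε : 0 ≤ 1 + ε)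
    (x : E) (g : F) (hfg : f = ub x + g) (h : NE x ^ p + (1 + ε) ^ p * NF g ^ p ≤ c ^ p) :
    corrNorm NE NF ub p ε f ≤ c := by
  have hbdd : BddBelow {r : ℝ | ∃ x : E, ∃ g : F,
      f = ub x + g ∧ r = (NE x ^ p + (1 + ε) ^ p * NF g ^ p) ^ (1 / p)} := by
    refine ⟨0, ?_⟩
    rintro r ⟨x, g, -, rfl⟩
    positivity [hNE0 x, hNF0 g]
  refine (csInf_le hbdd ⟨x, g, hfg, rfl⟩).trans ?_
  rw [one_div, Real.rpow_inv_le_iff_of_pos (by positivity [hNE0 x, hNF0 g]) hc hp]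
  exact h

lemma corrNorm_le_mul (hp : 0 < p) (hNE0 : ∀ x, 0 ≤ NE x) (hNF0 : ∀ f, 0 ≤ NF f)
    (hNEhom : ∀ (c : ℝ) (x : E), NE (c • x) = |c| * NE x) (hε : 0 ≤ 1 + ε) (f : F) :
    corrNorm NE NF ub p ε f ≤ (1 + ε) * NF f := by
  have hNE_zero : NE 0 = 0 := by simpa using hNEhom 0 0
  refine corrNorm_le_of_le_rpow hp (mul_nonneg hε (hNF0 f)) hNE0 hNF0 hε 0 f (by simp) ?_
  rw [hNE_zero, Real.zero_rpow hp.ne', zero_add, Real.mul_rpow hε (hNF0 f)]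

lemma corrNorm_apply_le (hp : 0 < p) (hNE0 : ∀ x, 0 ≤ NE x) (hNF0 : ∀ f, 0 ≤ NF f)
    (hNFhom : ∀ (c : ℝ) (f : F), NF (c • f) = |c| * NF f) (hε : 0 ≤ 1 + ε) (x : E) :
    corrNorm NE NF ub p ε (ub x) ≤ NE x := by
  have hNF_zero : NF 0 = 0 := by simpa using hNFhom 0 0
  refine corrNorm_le_of_le_rpow hp (hNE0 x) hNE0 hNF0 hε x 0 (by simp) ?_
  rw [hNF_zero, Real.zero_rpow hp.ne', mul_zero, add_zero]

lemma le_corrNorm_of_leftInverse (hp : 0 < p) (hNE0 : ∀ x, 0 ≤ NE x)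
    (hNF0 : ∀ f, 0 ≤ NF f) (hNEp : ∀ x y, NE (x + y) ^ p ≤ NE x ^ p + NE y ^ p)
    (hε : 0 ≤ 1 + ε) {us : F →ₗ[ℝ] E} (hpair : ∀ x : E, us (ub x) = x)
    (hus : ∀ f : F, NE (us f) ≤ (1 + ε) * NF f) (f : F) :
    NE (us f) ≤ corrNorm NE NF ub p ε f := by
  refine le_corrNorm_of_rpow_le hp (hNE0 _) hNE0 hNF0 hε fun x g hfg => ?_
  have hus_f : us f = x + us g := by rw [hfg, map_add, hpair]
  calc NE (us f) ^ p ≤ NE x ^ p + NE (us g) ^ p := hus_f ▸ hNEp x (us g)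
    _ ≤ NE x ^ p + (1 + ε) ^ p * NF g ^ p := by
      gcongr
      exact Real.rpow_le_mul_rpow_of_le_mul (hNE0 _) (hNF0 g) hε hp.le (hus g)

lemma inv_mul_le_corrNorm (hp : 0 < p) (hNE0 : ∀ x, 0 ≤ NE x) (hNF0 : ∀ f, 0 ≤ NF f)
    (hNFp : ∀ f g, NF (f + g) ^ p ≤ NF f ^ p + NF g ^ p) (hε : 0 ≤ ε)
    (hub : ∀ x : E, NF (ub x) ≤ (1 + ε) * NE x) (f : F) :
    (1 + ε)⁻¹ * NF f ≤ corrNorm NE NF ub p ε f := by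
  have h1ε : (0 : ℝ) < 1 + ε := by linarith
  refine le_corrNorm_of_rpow_le hp (by positivity [hNF0 f]) hNE0 hNF0 h1ε.le fun x g hfg => ?_
  rw [Real.mul_rpow (inv_nonneg.2 h1ε.le) (hNF0 f), Real.inv_rpow h1ε.le,
    inv_mul_le_iff₀ (by positivity)]
  set K := (1 + ε) ^ p
  have hK : 1 ≤ K := Real.one_le_rpow (by linarith) hp.le
  have hub_p : NF (ub x) ^ p ≤ K * NE x ^ p :=
    Real.rpow_le_mul_rpow_of_le_mul (hNF0 _) (hNE0 x) h1ε.le hp.le (hub x)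
  have hf_p : NF f ^ p ≤ NF (ub x) ^ p + NF g ^ p := hfg ▸ hNFp (ub x) g
  have hg_p : NF g ^ p ≤ K * K * NF g ^ p :=
    le_mul_of_one_le_left (by positivity [hNF0 g]) (one_le_mul_of_one_le_of_one_le hK hK)
  linarith

end CorrNorm

theorem correction_of_the_bound_general (p ε : ℝ) (hp0 : 0 < p) (hε : 0 < ε)
    (E : Type*) [AddCommGroup E] [Module ℝ E]
    (F : Type*) [AddCommGroup F] [Module ℝ F]
    (NE : E → ℝ) (NF : F → ℝ)
    (hNE0 : ∀ x, 0 ≤ NE x)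
    (hNEhom : ∀ (c : ℝ) (x : E), NE (c • x) = |c| * NE x)
    (hNEp : ∀ x y, NE (x + y) ^ p ≤ NE x ^ p + NE y ^ p)
    (hNF0 : ∀ f, 0 ≤ NF f)
    (hNFhom : ∀ (c : ℝ) (f : F), NF (c • f) = |c| * NF f)
    (hNFp : ∀ f g, NF (f + g) ^ p ≤ NF f ^ p + NF g ^ p)
    (ub : E →ₗ[ℝ] F) (us : F →ₗ[ℝ] E)
    (hpair : ∀ x : E, us (ub x) = x)
    (hub : ∀ x : E, NF (ub x) ≤ (1 + ε) * NE x)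
    (hus : ∀ f : F, NE (us f) ≤ (1 + ε) * NF f) :
    (∀ f : F, (1 + ε)⁻¹ * NF f ≤ corrNorm NE NF ub p ε f ∧
      corrNorm NE NF ub p ε f ≤ (1 + ε) * NF f) ∧
    (∀ x : E, corrNorm NE NF ub p ε (ub x) = NE x) ∧
    (∀ f : F, NE (us f) ≤ corrNorm NE NF ub p ε f) := by
  have h1ε : (0 : ℝ) ≤ 1 + ε := by linarith
  have hus_le : ∀ f, NE (us f) ≤ corrNorm NE NF ub p ε f :=
    le_corrNorm_of_leftInverse hp0 hNE0 hNF0 hNEp h1ε hpair hus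
  refine ⟨fun f => ⟨?_, ?_⟩, fun x => le_antisymm ?_ ?_, hus_le⟩
  · exact inv_mul_le_corrNorm hp0 hNE0 hNF0 hNFp hε.le hub f
  · exact corrNorm_le_mul hp0 hNE0 hNF0 hNEhom h1ε f
  · exact corrNorm_apply_le hp0 hNE0 hNF0 hNFhom h1ε x
  · simpa only [hpair] using hus_le (ub x)

/-- Correction of the bound: renorming `F` by `corrNorm` makes the pair
`⟨u♭, u♯⟩` contractive, the new `p`-norm being `(1+ε)`-equivalent to the old one. -/
theorem correction_of_the_bound (p ε : ℝ) (hp0 : 0 < p) (hp1 : p ≤ 1) (hε : 0 < ε)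
    (E : Type*) [AddCommGroup E] [Module ℝ E]
    (F : Type*) [AddCommGroup F] [Module ℝ F]
    (NE : E → ℝ) (NF : F → ℝ)
    (hNE0 : ∀ x, 0 ≤ NE x) (hNEdef : ∀ x, NE x = 0 ↔ x = 0)
    (hNEhom : ∀ (c : ℝ) (x : E), NE (c • x) = |c| * NE x)
    (hNEp : ∀ x y, NE (x + y) ^ p ≤ NE x ^ p + NE y ^ p)
    (hNF0 : ∀ f, 0 ≤ NF f) (hNFdef : ∀ f, NF f = 0 ↔ f = 0)
    (hNFhom : ∀ (c : ℝ) (f : F), NF (c • f) = |c| * NF f)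
    (hNFp : ∀ f g, NF (f + g) ^ p ≤ NF f ^ p + NF g ^ p)
    (ub : E →ₗ[ℝ] F) (us : F →ₗ[ℝ] E)
    (hpair : ∀ x : E, us (ub x) = x)
    (hub : ∀ x : E, NF (ub x) ≤ (1 + ε) * NE x)
    (hus : ∀ f : F, NE (us f) ≤ (1 + ε) * NF f) :
    (∀ f : F, (1 + ε)⁻¹ * NF f ≤ corrNorm NE NF ub p ε f ∧
      corrNorm NE NF ub p ε f ≤ (1 + ε) * NF f) ∧
    (∀ x : E, corrNorm NE NF ub p ε (ub x) = NE x) ∧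
    (∀ f : F, NE (us f) ≤ corrNorm NE NF ub p ε f) :=
  correction_of_the_bound_general p ε hp0 hε E F NE NF hNE0 hNEhom hNEp hNF0 hNFhom hNFp ub us hpair
    hub hus
end

section
/- Splitting of approximate pairs through an amalgam (Lemma on W): let X, U be p-Banach spaces and f^† : X → U, f^‡ : U → X contractive operators with ‖f^‡ f^† − 1_X‖ ≤ ε. On W = X ⊕ U define ‖(x,y)‖ = inf { (‖x₀‖^p + ‖y₁‖^p + ε^p‖x₂‖^p)^(1/p) : (x,y) = (x₀,0) + (0,y₁) + (x₂, −f^†x₂) }. Then, with α^♭(x) = (x,0), β^♭(y) = (0,y), α^♯(x,y) = x + f^‡(y), β^♯(x,y) = y + f^†(x): (i) ‖(x,0)‖ = ‖x‖ and ‖(0,y)‖ = ‖y‖; (ii) α^♯α^♭ = 1_X, β^♯β^♭ = 1_U, f^† = β^♯α^♭, f^‡ = α^♯β^♭; (iii) ‖α^♯‖ ≤ 1 and ‖β^♯‖ ≤ 1; (iv) ‖α^♭ − β^♭ f^†‖ ≤ ε. -/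
open scoped BigOperators

/-- The quasinorm on `W = X ⊕ U` used in the splitting lemma:
`‖(x,y)‖ = inf {(‖x₀‖^p + ‖y₁‖^p + ε^p ‖x₂‖^p)^(1/p) : (x,y) = (x₀,0)+(0,y₁)+(x₂,−f† x₂)}`. -/
noncomputable def WNorm {X U : Type*} [AddCommGroup X] [Module ℝ X]
    [AddCommGroup U] [Module ℝ U]
    (NX : X → ℝ) (NU : U → ℝ) (fdag : X →ₗ[ℝ] U) (p ε : ℝ) (z : X × U) : ℝ :=
  sInf {r : ℝ | ∃ x0 : X, ∃ y1 : U, ∃ x2 : X,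
    z.1 = x0 + x2 ∧ z.2 = y1 - fdag x2 ∧
    r = (NX x0 ^ p + NU y1 ^ p + ε ^ p * NX x2 ^ p) ^ (1 / p)}

/-!
Upper bounds for the amalgam quasinorm come from exhibiting one decomposition
`(x,y) = (x₀,0) + (0,y₁) + (x₂,−f†x₂)`. For the lower bounds it suffices that the
projections `α♯(x,y) = x + f‡y` and `β♯(x,y) = y + f†x` are contractive, and by the
`p`-triangle inequality this is checked on each summand: `α♯` sends the three pieces to
`x₀`, `f‡y₁` and `x₂ − f‡f†x₂`, of `p`-th powers at most `‖x₀‖^p`, `‖y₁‖^p`, `ε^p‖x₂‖^p`,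
while `β♯` sends them to `f†x₀`, `y₁` and `0`.
-/

section Amalgam

variable {X U : Type*} [AddCommGroup X] [Module ℝ X] [AddCommGroup U] [Module ℝ U]
  {NX : X → ℝ} {NU : U → ℝ} {fdag : X →ₗ[ℝ] U} {p ε : ℝ}

theorem WNorm_le_of_decomposition (hp : 0 < p) (hε : 0 ≤ ε)
    (hNX0 : ∀ x, 0 ≤ NX x) (hNU0 : ∀ y, 0 ≤ NU y) {z : X × U} {b : ℝ} (hb : 0 ≤ b)
    (x0 x2 : X) (y1 : U) (h1 : z.1 = x0 + x2) (h2 : z.2 = y1 - fdag x2)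
    (hcost : NX x0 ^ p + NU y1 ^ p + ε ^ p * NX x2 ^ p ≤ b ^ p) :
    WNorm NX NU fdag p ε z ≤ b := by
  have cost_nonneg : ∀ x0 y1 x2,
      0 ≤ NX x0 ^ p + NU y1 ^ p + ε ^ p * NX x2 ^ p := fun x0 y1 x2 => by
    have := hNX0 x0; have := hNU0 y1; have := hNX0 x2
    positivity
  calc WNorm NX NU fdag p ε z
      ≤ (NX x0 ^ p + NU y1 ^ p + ε ^ p * NX x2 ^ p) ^ (1 / p) :=
        csInf_le
          ⟨0, by rintro r ⟨x0, y1, x2, -, -, rfl⟩; exact Real.rpow_nonneg (cost_nonneg ..) _⟩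
          ⟨x0, y1, x2, h1, h2, rfl⟩
    _ ≤ (b ^ p) ^ p⁻¹ := by
        rw [one_div]; exact Real.rpow_le_rpow (cost_nonneg ..) hcost (by positivity)
    _ = b := Real.rpow_rpow_inv hb hp.ne'

theorem le_WNorm_of_forall_decomposition (hp : 0 < p) {z : X × U} {a : ℝ} (ha : 0 ≤ a)
    (h : ∀ x0 x2 y1, z.1 = x0 + x2 → z.2 = y1 - fdag x2 →
      a ^ p ≤ NX x0 ^ p + NU y1 ^ p + ε ^ p * NX x2 ^ p) :
    a ≤ WNorm NX NU fdag p ε z := by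
  refine le_csInf ⟨_, z.1, z.2, 0, by simp, by simp, rfl⟩ ?_
  rintro r ⟨x0, y1, x2, h1, h2, rfl⟩
  have hcost := h x0 x2 y1 h1 h2
  rw [one_div, Real.le_rpow_inv_iff_of_pos ha ((Real.rpow_nonneg ha p).trans hcost) hp]
  exact hcost

theorem alphaSharp_le_WNorm {fddag : U →ₗ[ℝ] X} (hp : 0 < p) (hε : 0 ≤ ε)
    (hNX0 : ∀ x, 0 ≤ NX x) (hNX_neg : ∀ x, NX (-x) = NX x)
    (hNXp : ∀ x x', NX (x + x') ^ p ≤ NX x ^ p + NX x' ^ p)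
    (hfddag : ∀ y, NX (fddag y) ≤ NU y) (happrox : ∀ x, NX (fddag (fdag x) - x) ≤ ε * NX x)
    (z : X × U) : NX (z.1 + fddag z.2) ≤ WNorm NX NU fdag p ε z := by
  refine le_WNorm_of_forall_decomposition hp (hNX0 _) fun x0 x2 y1 h1 h2 => ?_
  have hsplit : z.1 + fddag z.2 = x0 + (fddag y1 + -(fddag (fdag x2) - x2)) := by
    rw [h1, h2, map_sub]; abel
  have hy1 : NX (fddag y1) ^ p ≤ NU y1 ^ p := Real.rpow_le_rpow (hNX0 _) (hfddag y1) hp.le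
  have hx2 : NX (-(fddag (fdag x2) - x2)) ^ p ≤ ε ^ p * NX x2 ^ p := by
    rw [hNX_neg, ← Real.mul_rpow hε (hNX0 x2)]
    exact Real.rpow_le_rpow (hNX0 _) (happrox x2) hp.le
  rw [hsplit]
  linarith [hNXp x0 (fddag y1 + -(fddag (fdag x2) - x2)),
    hNXp (fddag y1) (-(fddag (fdag x2) - x2))]

theorem betaSharp_le_WNorm (hp : 0 < p) (hε : 0 ≤ ε)
    (hNX0 : ∀ x, 0 ≤ NX x) (hNU0 : ∀ y, 0 ≤ NU y)
    (hNUp : ∀ y y', NU (y + y') ^ p ≤ NU y ^ p + NU y' ^ p)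
    (hfdag : ∀ x, NU (fdag x) ≤ NX x) (z : X × U) :
    NU (z.2 + fdag z.1) ≤ WNorm NX NU fdag p ε z := by
  refine le_WNorm_of_forall_decomposition hp (hNU0 _) fun x0 x2 y1 h1 h2 => ?_
  have hsplit : z.2 + fdag z.1 = y1 + fdag x0 := by
    rw [h1, h2, map_add]; abel
  have hx0 : NU (fdag x0) ^ p ≤ NX x0 ^ p := Real.rpow_le_rpow (hNU0 _) (hfdag x0) hp.le
  have hx2 : 0 ≤ ε ^ p * NX x2 ^ p := by have := hNX0 x2; positivity
  rw [hsplit]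
  linarith [hNUp y1 (fdag x0)]

end Amalgam

theorem splitting_through_amalgam_general (p ε : ℝ) (hp0 : 0 < p)
    (hε0 : 0 < ε)
    (X U : Type*) [AddCommGroup X] [Module ℝ X] [AddCommGroup U] [Module ℝ U]
    (NX : X → ℝ) (NU : U → ℝ)
    (hNX0 : ∀ x, 0 ≤ NX x)
    (hNXhom : ∀ (c : ℝ) (x : X), NX (c • x) = |c| * NX x)
    (hNXp : ∀ x x', NX (x + x') ^ p ≤ NX x ^ p + NX x' ^ p)
    (hNU0 : ∀ y, 0 ≤ NU y)
    (hNUhom : ∀ (c : ℝ) (y : U), NU (c • y) = |c| * NU y)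
    (hNUp : ∀ y y', NU (y + y') ^ p ≤ NU y ^ p + NU y' ^ p)
    (fdag : X →ₗ[ℝ] U) (fddag : U →ₗ[ℝ] X)
    (hfdag : ∀ x, NU (fdag x) ≤ NX x)
    (hfddag : ∀ y, NX (fddag y) ≤ NU y)
    (happrox : ∀ x, NX (fddag (fdag x) - x) ≤ ε * NX x) :
    -- (i) the canonical embeddings are isometric
    (∀ x : X, WNorm NX NU fdag p ε (x, 0) = NX x) ∧
    (∀ y : U, WNorm NX NU fdag p ε (0, y) = NU y) ∧
    -- (ii) pair identities and factorizations
    (∀ x : X, x + fddag (0 : U) = x) ∧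
    (∀ y : U, y + fdag (0 : X) = y) ∧
    (∀ x : X, (0 : U) + fdag x = fdag x) ∧
    (∀ y : U, (0 : X) + fddag y = fddag y) ∧
    -- (iii) the projections α♯(x,y) = x + f‡ y and β♯(x,y) = y + f† x are contractive
    (∀ z : X × U, NX (z.1 + fddag z.2) ≤ WNorm NX NU fdag p ε z) ∧
    (∀ z : X × U, NU (z.2 + fdag z.1) ≤ WNorm NX NU fdag p ε z) ∧
    -- (iv) ‖α♭ − β♭ f†‖ ≤ ε
    (∀ x : X, WNorm NX NU fdag p ε ((x, 0) - (0, fdag x)) ≤ ε * NX x) := by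
  have hNX_zero : NX 0 = 0 := by simpa using hNXhom 0 0
  have hNU_zero : NU 0 = 0 := by simpa using hNUhom 0 0
  have hNX_neg : ∀ x, NX (-x) = NX x := fun x => by simpa using hNXhom (-1) x
  have hzero_rpow : (0 : ℝ) ^ p = 0 := Real.zero_rpow hp0.ne'
  have hα := alphaSharp_le_WNorm hp0 hε0.le hNX0 hNX_neg hNXp hfddag happrox
  have hβ := betaSharp_le_WNorm hp0 hε0.le hNX0 hNU0 hNUp hfdag
  refine ⟨fun x => le_antisymm ?_ (by simpa using hα (x, 0)),
    fun y => le_antisymm ?_ (by simpa using hβ (0, y)),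
    fun x => by simp, fun y => by simp, fun x => by simp, fun y => by simp, hα, hβ,
    fun x => ?_⟩
  · exact WNorm_le_of_decomposition hp0 hε0.le hNX0 hNU0 (hNX0 x) x 0 0 (by simp) (by simp)
      (by simp [hNX_zero, hNU_zero, hzero_rpow])
  · exact WNorm_le_of_decomposition hp0 hε0.le hNX0 hNU0 (hNU0 y) 0 0 y (by simp) (by simp)
      (by simp [hNX_zero, hzero_rpow])
  · refine WNorm_le_of_decomposition hp0 hε0.le hNX0 hNU0 (mul_nonneg hε0.le (hNX0 x))
      0 x 0 (by simp) (by simp) ?_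
    simp [hNX_zero, hNU_zero, hzero_rpow, Real.mul_rpow hε0.le (hNX0 x)]

/-- Splitting of approximate pairs through an amalgam: if `f† : X → U` and
`f‡ : U → X` are contractive with `‖f‡ f† − 1‖ ≤ ε`, then on `W = X ⊕ U` with the
above quasinorm, `α = ⟨x ↦ (x,0), (x,y) ↦ x + f‡ y⟩` and `β = ⟨y ↦ (0,y), (x,y) ↦ y + f† x⟩`
are contractive pairs with `f† = β♯ α♭`, `f‡ = α♯ β♭` and `‖α♭ − β♭ f†‖ ≤ ε`. -/
theorem splitting_through_amalgam (p ε : ℝ) (hp0 : 0 < p) (hp1 : p ≤ 1)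
    (hε0 : 0 < ε) (hε1 : ε < 1)
    (X U : Type*) [AddCommGroup X] [Module ℝ X] [AddCommGroup U] [Module ℝ U]
    (NX : X → ℝ) (NU : U → ℝ)
    (hNX0 : ∀ x, 0 ≤ NX x) (hNXdef : ∀ x, NX x = 0 ↔ x = 0)
    (hNXhom : ∀ (c : ℝ) (x : X), NX (c • x) = |c| * NX x)
    (hNXp : ∀ x x', NX (x + x') ^ p ≤ NX x ^ p + NX x' ^ p)
    (hNU0 : ∀ y, 0 ≤ NU y) (hNUdef : ∀ y, NU y = 0 ↔ y = 0)
    (hNUhom : ∀ (c : ℝ) (y : U), NU (c • y) = |c| * NU y)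
    (hNUp : ∀ y y', NU (y + y') ^ p ≤ NU y ^ p + NU y' ^ p)
    (fdag : X →ₗ[ℝ] U) (fddag : U →ₗ[ℝ] X)
    (hfdag : ∀ x, NU (fdag x) ≤ NX x)
    (hfddag : ∀ y, NX (fddag y) ≤ NU y)
    (happrox : ∀ x, NX (fddag (fdag x) - x) ≤ ε * NX x) :
    -- (i) the canonical embeddings are isometric
    (∀ x : X, WNorm NX NU fdag p ε (x, 0) = NX x) ∧
    (∀ y : U, WNorm NX NU fdag p ε (0, y) = NU y) ∧
    -- (ii) pair identities and factorizations
    (∀ x : X, x + fddag (0 : U) = x) ∧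
    (∀ y : U, y + fdag (0 : X) = y) ∧
    (∀ x : X, (0 : U) + fdag x = fdag x) ∧
    (∀ y : U, (0 : X) + fddag y = fddag y) ∧
    -- (iii) the projections α♯(x,y) = x + f‡ y and β♯(x,y) = y + f† x are contractive
    (∀ z : X × U, NX (z.1 + fddag z.2) ≤ WNorm NX NU fdag p ε z) ∧
    (∀ z : X × U, NU (z.2 + fdag z.1) ≤ WNorm NX NU fdag p ε z) ∧
    -- (iv) ‖α♭ − β♭ f†‖ ≤ ε
    (∀ x : X, WNorm NX NU fdag p ε ((x, 0) - (0, fdag x)) ≤ ε * NX x) :=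
  splitting_through_amalgam_general p ε hp0 hε0 X U NX NU hNX0 hNXhom hNXp hNU0 hNUhom hNUp fdag
    fddag hfdag hfddag happrox
end

section
/- Haydon-type separation: let E be the Euclidean plane, and for each unit vector u ∈ E define the p-norm |(x,t)|_u = max(‖x‖₂, (|⟨x,u⟩|^p + |t|^p)^(1/p)) on E × ℝ. Suppose X is a p-Banach space containing E isometrically, and for each u in the positive quarter S₊ of the unit circle there is e_u ∈ X with ‖e_u‖ = 1 such that ‖x + t e_u‖ = |(x,t)|_u for all (x,t). Then ‖e_u − e_v‖ ≥ 1 whenever u, v ∈ S₊ are distinct. -/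
/-!
Put `a = ⟨u, v⟩ ∈ [0, 1)` and choose `s > 0` with `s^p = s^p a^p + 1`, i.e. `s^p = 1 / (1 - a^p)`.
For `x = s u` the second term of `|(x, 1)|_v = max (s, (s^p a^p + 1)^{1/p})` is exactly `s`, so
`‖x + e_v‖ = s`, while `‖x + e_u‖ = (s^p + 1)^{1/p}`. The `p`-triangle inequality for
`x + e_u = (x + e_v) + (e_u - e_v)` then reads `s^p + 1 ≤ s^p + ‖e_u - e_v‖^p`.
-/

open Real

/-- The paper's `|(x, t)|_u` on `E × ℝ`. -/
noncomputable def haydonNorm (p : ℝ) (u x : ℝ × ℝ) (t : ℝ) : ℝ :=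
  max (√(x.1 ^ 2 + x.2 ^ 2)) ((|x.1 * u.1 + x.2 * u.2| ^ p + |t| ^ p) ^ (1 / p))

lemma inner_lt_one_of_ne {u v : ℝ × ℝ} (hu : u.1 ^ 2 + u.2 ^ 2 = 1)
    (hv : v.1 ^ 2 + v.2 ^ 2 = 1) (huv : u ≠ v) : u.1 * v.1 + u.2 * v.2 < 1 := by
  have hdist : 0 < (u.1 - v.1) ^ 2 + (u.2 - v.2) ^ 2 := by
    rcases not_and_or.mp (mt Prod.ext_iff.mpr huv) with h | h
    · nlinarith [sq_pos_of_ne_zero (sub_ne_zero.mpr h), sq_nonneg (u.2 - v.2)]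
    · nlinarith [sq_pos_of_ne_zero (sub_ne_zero.mpr h), sq_nonneg (u.1 - v.1)]
  nlinarith

lemma exists_rpow_mul_add_one_eq {p c : ℝ} (hp : 0 < p) (hc : c < 1) :
    ∃ s : ℝ, 0 ≤ s ∧ s ^ p * c + 1 = s ^ p := by
  have hc' : 0 < 1 - c := sub_pos.mpr hc
  refine ⟨(1 - c)⁻¹ ^ p⁻¹, by positivity, ?_⟩
  rw [rpow_inv_rpow (by positivity) hp.ne']
  field_simp
  ring

lemma sqrt_smul_unit {u : ℝ × ℝ} (hu : u.1 ^ 2 + u.2 ^ 2 = 1) {s : ℝ} (hs : 0 ≤ s) :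
    √((s • u).1 ^ 2 + (s • u).2 ^ 2) = s := by
  have h : (s • u).1 ^ 2 + (s • u).2 ^ 2 = s ^ 2 := by
    simp only [Prod.smul_fst, Prod.smul_snd, smul_eq_mul]
    linear_combination s ^ 2 * hu
  rw [h, sqrt_sq hs]

lemma haydonNorm_smul_self {p : ℝ} (hp : 0 < p) {u : ℝ × ℝ} (hu : u.1 ^ 2 + u.2 ^ 2 = 1)
    {s : ℝ} (hs : 0 ≤ s) : haydonNorm p u (s • u) 1 = (s ^ p + 1) ^ (1 / p) := by
  have hinner : (s • u).1 * u.1 + (s • u).2 * u.2 = s := by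
    simp only [Prod.smul_fst, Prod.smul_snd, smul_eq_mul]
    linear_combination s * hu
  have hle : s ≤ (s ^ p + 1) ^ (1 / p) := by
    rw [one_div, le_rpow_inv_iff_of_pos hs (by positivity) hp]
    linarith
  rw [haydonNorm, sqrt_smul_unit hu hs, hinner, abs_of_nonneg hs, abs_one, one_rpow,
    max_eq_right hle]

lemma haydonNorm_smul_of_balanced {p : ℝ} (hp : 0 < p) {u v : ℝ × ℝ}
    (hu : u.1 ^ 2 + u.2 ^ 2 = 1) (ha : 0 ≤ u.1 * v.1 + u.2 * v.2) {s : ℝ} (hs : 0 ≤ s)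
    (hbal : s ^ p * (u.1 * v.1 + u.2 * v.2) ^ p + 1 = s ^ p) :
    haydonNorm p v (s • u) 1 = s := by
  have hinner : (s • u).1 * v.1 + (s • u).2 * v.2 = s * (u.1 * v.1 + u.2 * v.2) := by
    simp only [Prod.smul_fst, Prod.smul_snd, smul_eq_mul]
    ring
  rw [haydonNorm, sqrt_smul_unit hu hs, hinner, abs_of_nonneg (mul_nonneg hs ha), abs_one,
    one_rpow, mul_rpow hs ha, hbal, one_div, rpow_rpow_inv hs hp.ne', max_self]

lemma one_le_of_rpow_triangle {X : Type*} [AddCommGroup X] {N : X → ℝ} {p : ℝ} (hp : 0 < p)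
    (hN0 : ∀ x, 0 ≤ N x) (hNp : ∀ x x', N (x + x') ^ p ≤ N x ^ p + N x' ^ p)
    {y e e' : X} {s : ℝ} (hs : 0 ≤ s)
    (he : N (y + e) = (s ^ p + 1) ^ (1 / p)) (he' : N (y + e') = s) : 1 ≤ N (e - e') := by
  have htri := hNp (y + e') (e - e')
  rw [add_add_sub_cancel, he, he', one_div, rpow_inv_rpow (by positivity) hp.ne'] at htri
  exact (rpow_le_rpow_iff zero_le_one (hN0 _) hp).mp (by rw [one_rpow]; linarith)

theorem haydon_separation_general (p : ℝ) (hp0 : 0 < p)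
    (X : Type*) [AddCommGroup X] [Module ℝ X]
    (NX : X → ℝ)
    (hNX0 : ∀ x, 0 ≤ NX x)
    (hNXp : ∀ x x', NX (x + x') ^ p ≤ NX x ^ p + NX x' ^ p)
    (ι : (ℝ × ℝ) →ₗ[ℝ] X)
    (u v : ℝ × ℝ)
    (hu : Real.sqrt (u.1 ^ 2 + u.2 ^ 2) = 1) (hv : Real.sqrt (v.1 ^ 2 + v.2 ^ 2) = 1)
    (hupos : 0 < u.1 ∧ 0 < u.2) (hvpos : 0 < v.1 ∧ 0 < v.2)
    (huv : u ≠ v)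
    (eu ev : X)
    (hisomu : ∀ (x : ℝ × ℝ) (t : ℝ),
      NX (ι x + t • eu) =
        max (Real.sqrt (x.1 ^ 2 + x.2 ^ 2))
          ((|x.1 * u.1 + x.2 * u.2| ^ p + |t| ^ p) ^ (1 / p)))
    (hisomv : ∀ (x : ℝ × ℝ) (t : ℝ),
      NX (ι x + t • ev) =
        max (Real.sqrt (x.1 ^ 2 + x.2 ^ 2))
          ((|x.1 * v.1 + x.2 * v.2| ^ p + |t| ^ p) ^ (1 / p))) :
    1 ≤ NX (eu - ev) := by
  have hu1 := sqrt_eq_one.mp hu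
  have hinner0 : 0 ≤ u.1 * v.1 + u.2 * v.2 := by
    nlinarith [mul_pos hupos.1 hvpos.1, mul_pos hupos.2 hvpos.2]
  obtain ⟨s, hs, hbal⟩ := exists_rpow_mul_add_one_eq hp0
    (rpow_lt_one hinner0 (inner_lt_one_of_ne hu1 (sqrt_eq_one.mp hv) huv) hp0)
  refine one_le_of_rpow_triangle hp0 hNX0 hNXp hs (y := ι (s • u)) ?_ ?_
  · simpa only [one_smul] using (hisomu (s • u) 1).trans (haydonNorm_smul_self hp0 hu1 hs)
  · simpa only [one_smul] using
      (hisomv (s • u) 1).trans (haydonNorm_smul_of_balanced hp0 hu1 hinner0 hs hbal)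

/-- Haydon-type separation: if `X` contains, for two distinct unit vectors `u, v` of the
positive quarter of the Euclidean circle, isometric copies of the three-dimensional spaces
`F_u` and `F_v` (with `|(x,t)|_u = max(‖x‖₂, (|⟨x,u⟩|^p + |t|^p)^{1/p})`) extending a common
isometric copy of the Euclidean plane, then the corresponding vectors `e_u` and `e_v`
satisfy `‖e_u − e_v‖ ≥ 1`. -/
theorem haydon_separation (p : ℝ) (hp0 : 0 < p) (hp1 : p ≤ 1)
    (X : Type*) [AddCommGroup X] [Module ℝ X]
    (NX : X → ℝ)
    (hNX0 : ∀ x, 0 ≤ NX x) (hNXdef : ∀ x, NX x = 0 ↔ x = 0)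
    (hNXhom : ∀ (c : ℝ) (x : X), NX (c • x) = |c| * NX x)
    (hNXp : ∀ x x', NX (x + x') ^ p ≤ NX x ^ p + NX x' ^ p)
    (ι : (ℝ × ℝ) →ₗ[ℝ] X)
    (u v : ℝ × ℝ)
    (hu : Real.sqrt (u.1 ^ 2 + u.2 ^ 2) = 1) (hv : Real.sqrt (v.1 ^ 2 + v.2 ^ 2) = 1)
    (hupos : 0 < u.1 ∧ 0 < u.2) (hvpos : 0 < v.1 ∧ 0 < v.2)
    (huv : u ≠ v)
    (eu ev : X) (heu : NX eu = 1) (hev : NX ev = 1)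
    (hisomu : ∀ (x : ℝ × ℝ) (t : ℝ),
      NX (ι x + t • eu) =
        max (Real.sqrt (x.1 ^ 2 + x.2 ^ 2))
          ((|x.1 * u.1 + x.2 * u.2| ^ p + |t| ^ p) ^ (1 / p)))
    (hisomv : ∀ (x : ℝ × ℝ) (t : ℝ),
      NX (ι x + t • ev) =
        max (Real.sqrt (x.1 ^ 2 + x.2 ^ 2))
          ((|x.1 * v.1 + x.2 * v.2| ^ p + |t| ^ p) ^ (1 / p))) :
    1 ≤ NX (eu - ev) :=
  haydon_separation_general p hp0 X NX hNX0 hNXp ι u v hu hv hupos hvpos huv eu ev hisomu hisomv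
end
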